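/- For a Bayesian network with evidence E and junction tree, the total evidence probability is obtained at any single cluster r: P(E) = ∑_{X_{C_r}} Φ_r(X_{C_r}) ∏_{i ∈ n(r)} M_{i→r}(X_{S_{ir}}). -/

import Mathlib

open Finset
open scoped Classical

/-- A junction tree for a Bayesian network with variable index set `U`:
a tree of clusters `C i ⊆ U` (indexed by `I`) satisfying the covering property
(via a cluster assignment `cl` with `fa(u) = {u} ∪ pa(u) ⊆ C (cl u)`) and the
running-intersection property. -/
structure JT (U : Type) [Fintype U] [DecidableEq U] (I : Type) [Fintype I] where
  /-- the tree on clusters -/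
  G : SimpleGraph I
  tree : G.IsTree
  /-- the clusters -/
  C : I → Finset U
  /-- the parent sets of the DAG of the Bayesian network -/
  pa : U → Finset U
  /-- the cluster assignment -/
  cl : U → I
  /-- covering: the family fa(u) of each variable is contained in its assigned cluster -/
  cover : ∀ u : U, insert u (pa u) ⊆ C (cl u)
  /-- running intersection -/
  runInter : ∀ i j : I, ∀ pth : G.Path i j, ∀ k ∈ pth.1.support, C i ∩ C j ⊆ C k

/-- The upstream set U_{i→j} : variables whose assigned cluster lies on the `i` side
of the edge i–j, i.e. `i` is on the path from `cl u` to `j`. -/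
noncomputable def upSet {U I : Type} [Fintype U] [DecidableEq U] [Fintype I]
    (J : JT U I) (i j : I) : Finset U :=
  Finset.univ.filter fun u => ∃ pth : J.G.Path (J.cl u) j, i ∈ pth.1.support

/-- The separator S_{ij} = C i ∩ C j of an edge. -/
def sep {U I : Type} [Fintype U] [DecidableEq U] [Fintype I]
    (J : JT U I) (i j : I) : Finset U := J.C i ∩ J.C j

/-- Marginal of a nonnegative function `f` on assignments: sum of `f` over all
assignments agreeing with `x` on the coordinates in `A`. -/
noncomputable def margOn {U : Type} [Fintype U] [DecidableEq U] {D : U → Type}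
    [∀ u, Fintype (D u)] [∀ u, DecidableEq (D u)]
    (f : (∀ u, D u) → ℝ) (A : Finset U) (x : ∀ u, D u) : ℝ :=
  ∑ z : ∀ u, D u, if ∀ v ∈ A, z v = x v then f z else 0

/-- The message M_{i→j}(X_{S_ij}) = ∑_{X_{V_{i→j}}} ∏_{u ∈ U_{i→j}} K_u, realized as a sum
over full assignments agreeing with `x` outside V_{i→j} = U_{i→j} \ S_{ij}. -/
noncomputable def msg {U I : Type} [Fintype U] [DecidableEq U] [Fintype I]
    (J : JT U I) {D : U → Type} [∀ u, Fintype (D u)] [∀ u, DecidableEq (D u)]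
    (K : (u : U) → (∀ v, D v) → ℝ) (i j : I) (x : ∀ u, D u) : ℝ :=
  ∑ z : ∀ u, D u,
    if ∀ v, v ∉ upSet J i j \ sep J i j → z v = x v
    then ∏ u ∈ upSet J i j, K u z else 0

/-- The neighbor set n(j) of a cluster in the junction tree. -/
noncomputable def nbr {U I : Type} [Fintype U] [DecidableEq U] [Fintype I]
    (J : JT U I) (j : I) : Finset I :=
  Finset.univ.filter fun i => J.G.Adj i j

/-- The cluster potential Φ_j = ∏_{u : cl u = j} K_u. -/
noncomputable def pot {U I : Type} [Fintype U] [DecidableEq U] [Fintype I]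
    (J : JT U I) {D : U → Type} [∀ u, Fintype (D u)] [∀ u, DecidableEq (D u)]
    (K : (u : U) → (∀ v, D v) → ℝ) (j : I) (x : ∀ u, D u) : ℝ :=
  ∏ u ∈ Finset.univ.filter (fun u => J.cl u = j), K u x

/-!
Every variable is either assigned to `r` or lies in the upstream set `U_{i→r}` of exactly one
neighbour `i` of `r`, and the coordinates outside `C_r` split into the disjoint interiors
`V_{i→r} = U_{i→r} \ S_{ir}`. Running intersection guarantees that `Φ_r` reads only `C_r` and
that the factors of branch `i` never read a coordinate of another interior `V_{j→r}`. Summing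
out the interiors is therefore distributive over the branches: it turns the product of the
branch factors into the product of the messages, leaving the sum over `X_{C_r}`.
-/
theorem DependsOn.mul {ι β : Type*} {α : ι → Type*} [Mul β] {f g : (∀ i, α i) → β}
    {S : Set ι} (hf : DependsOn f S) (hg : DependsOn g S) : DependsOn (f * g) S :=
  fun _ _ h => by rw [Pi.mul_apply, Pi.mul_apply, hf h, hg h]

theorem dependsOn_prod {ι κ β : Type*} {α : ι → Type*} [CommMonoid β] {s : Finset κ}
    {f : κ → (∀ i, α i) → β} {S : Set ι} (hf : ∀ k ∈ s, DependsOn (f k) S) :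
    DependsOn (∏ k ∈ s, f k) S :=
  fun _ _ h => by
    simp only [Finset.prod_apply]
    exact Finset.prod_congr rfl fun k hk => hf k hk h

section SumOut

variable {U : Type} [Fintype U] [DecidableEq U] {D : U → Type} [∀ u, Fintype (D u)]
  [∀ u, DecidableEq (D u)]

noncomputable def sumOut (V : Finset U) (f : (∀ u, D u) → ℝ) (x : ∀ u, D u) : ℝ :=
  ∑ y : ∀ u, D u, if ∀ v, v ∉ V → y v = x v then f y else 0

theorem sumOut_univ (f : (∀ u, D u) → ℝ) (x : ∀ u, D u) :
    sumOut Finset.univ f x = ∑ y, f y := by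
  simp [sumOut]

theorem sumOut_empty (f : (∀ u, D u) → ℝ) (x : ∀ u, D u) : sumOut ∅ f x = f x := by
  simp [sumOut, ← funext_iff]

theorem sumOut_mul_left {V : Finset U} {c : (∀ u, D u) → ℝ} (hc : DependsOn c (↑V)ᶜ)
    (f : (∀ u, D u) → ℝ) (x : ∀ u, D u) :
    sumOut V (c * f) x = c x * sumOut V f x := by
  rw [sumOut, sumOut, Finset.mul_sum]
  refine Finset.sum_congr rfl fun y _ => ?_
  split_ifs with hy
  · rw [Pi.mul_apply, hc fun v hv => hy v hv]
  · rw [mul_zero]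

theorem DependsOn.sumOut {S : Set U} {f : (∀ u, D u) → ℝ} (hf : DependsOn f S)
    (V : Finset U) : DependsOn (sumOut V f) (S \ ↑V) := by
  intro z z' hzz'
  rw [_root_.sumOut, _root_.sumOut, ← Finset.sum_filter, ← Finset.sum_filter]
  refine Finset.sum_bij' (fun y _ => V.piecewise y z') (fun y _ => V.piecewise y z) ?_ ?_ ?_ ?_ ?_
  all_goals simp only [Finset.mem_filter, Finset.mem_univ, true_and]
  · intro y _ v hv
    simp [hv]
  · intro y _ v hv
    simp [hv]
  · intro y hy
    funext v
    by_cases hv : v ∈ V <;> simp [hv, hy v]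
  · intro y hy
    funext v
    by_cases hv : v ∈ V <;> simp [hv, hy v]
  · intro y hy
    refine hf fun v hv => ?_
    by_cases hvV : v ∈ V
    · simp [hvV]
    · simp [hvV, hy v hvV, hzz' v ⟨hv, hvV⟩]

theorem sumOut_union {V W : Finset U} (hVW : Disjoint V W) (f : (∀ u, D u) → ℝ)
    (x : ∀ u, D u) : sumOut (V ∪ W) f x = sumOut V (sumOut W f) x := by
  have hpinned : ∀ y z : ∀ u, D u,
      ((∀ v, v ∉ V → z v = x v) ∧ (∀ v, v ∉ W → y v = z v)) ↔
        ((∀ v, v ∉ V ∪ W → y v = x v) ∧ V.piecewise y x = z) := by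
    intro y z
    constructor
    · rintro ⟨hz, hy⟩
      refine ⟨fun v hv => ?_, funext fun v => ?_⟩
      · rw [Finset.mem_union, not_or] at hv
        rw [hy v hv.2, hz v hv.1]
      · by_cases hvV : v ∈ V
        · simp [hvV, hy v (Finset.disjoint_left.1 hVW hvV)]
        · simp [hvV, hz v hvV]
    · rintro ⟨hy, rfl⟩
      refine ⟨fun v hv => by simp [hv], fun v hv => ?_⟩
      by_cases hvV : v ∈ V
      · simp [hvV]
      · simp [hvV, hy v (by simp [hvV, hv])]
  calc sumOut (V ∪ W) f x
      = ∑ y : ∀ u, D u, ∑ z : ∀ u, D u,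
          if (∀ v, v ∉ V → z v = x v) ∧ (∀ v, v ∉ W → y v = z v) then f y else 0 := by
        simp [sumOut, hpinned, ite_and]
    _ = sumOut V (sumOut W f) x := by
        rw [Finset.sum_comm]
        simp only [sumOut, ite_and, Finset.sum_ite_irrel, Finset.sum_const_zero]

theorem sumOut_biUnion_mul_prod {ι : Type*} [DecidableEq ι] (s : Finset ι)
    {V : ι → Finset U} (hV : (s : Set ι).PairwiseDisjoint V) {c : (∀ u, D u) → ℝ}
    (hc : DependsOn c (↑(s.biUnion V))ᶜ) {g : ι → (∀ u, D u) → ℝ}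
    (hg : ∀ i ∈ s, DependsOn (g i) (↑((s.erase i).biUnion V))ᶜ) (x : ∀ u, D u) :
    sumOut (s.biUnion V) (c * ∏ i ∈ s, g i) x = c x * ∏ i ∈ s, sumOut (V i) (g i) x := by
  induction s using Finset.induction_on with
  | empty => simp [sumOut_empty]
  | insert a s ha ih =>
    have hdisj : Disjoint (V a) (s.biUnion V) :=
      (Finset.disjoint_biUnion_right _ _ _).2 fun i hi =>
        hV (by simp) (by simp [hi]) (by rintro rfl; exact ha hi)
    have hrest : DependsOn (c * ∏ i ∈ s, g i) (↑(V a))ᶜ := by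
      refine (hc.mono ?_).mul (dependsOn_prod fun i hi => (hg i (by simp [hi])).mono ?_)
      · exact Set.compl_subset_compl.2 (by simp)
      · refine Set.compl_subset_compl.2 (Finset.coe_subset.2 (Finset.subset_biUnion_of_mem V ?_))
        simp [show a ≠ i by rintro rfl; exact ha hi]
    have hga : DependsOn (sumOut (V a) (g a)) (↑(s.biUnion V))ᶜ := by
      have := (hg a (Finset.mem_insert_self a s)).sumOut (V a)
      rw [Finset.erase_insert ha] at this
      exact this.mono Set.sdiff_subset
    have hsum : sumOut (V a) (c * (g a * ∏ i ∈ s, g i)) =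
        sumOut (V a) (g a) * (c * ∏ i ∈ s, g i) := by
      funext y
      rw [show c * (g a * ∏ i ∈ s, g i) = (c * ∏ i ∈ s, g i) * g a by ring,
        sumOut_mul_left hrest]
      exact mul_comm _ _
    rw [Finset.biUnion_insert, Finset.union_comm, sumOut_union hdisj.symm, Finset.prod_insert ha,
      hsum, sumOut_mul_left hga, ih, Finset.prod_insert ha]
    · ring
    · exact hV.subset (by simp)
    · exact hc.mono (Set.compl_subset_compl.2 (by simp))
    · intro i hi
      refine (hg i (by simp [hi])).mono (Set.compl_subset_compl.2 (Finset.coe_subset.2 ?_))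
      exact Finset.biUnion_subset_biUnion_of_subset_left V
        (Finset.erase_subset_erase i (Finset.subset_insert a s))

end SumOut

namespace SimpleGraph

variable {V : Type*} {G : SimpleGraph V}

theorem IsTree.eq_penultimate_of_adj (hT : G.IsTree) {a r i : V} {p : G.Walk a r}
    (hp : p.IsPath) (hi : i ∈ p.support) (h : G.Adj i r) : i = p.penultimate := by
  have hdrop : p.dropUntil i hi = h.toWalk :=
    (hT.existsUnique_path i r).unique (hp.dropUntil hi) h.isPath_toWalk
  have hedge : s(i, r) ∈ p.edges := p.edges_dropUntil_subset_edges hi (by simp [hdrop])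
  exact hp.eq_penultimate_of_mem_edges (Sym2.eq_swap ▸ hedge)

theorem IsTree.mem_support_of_mem_path_of_notMem_path (hT : G.IsTree) {a b r k : V}
    {p : G.Walk a r} (hp : p.IsPath) (hk : k ∈ p.support) {q : G.Walk b r}
    (hkq : k ∉ q.support) (w : G.Walk a b) : k ∈ w.support := by
  have hbypass : (w.append q).bypass = p :=
    (hT.existsUnique_path a r).unique (w.append q).bypass_isPath hp
  have hk' := (w.append q).support_bypass_subset_support (hbypass ▸ hk)
  rw [Walk.mem_support_append_iff] at hk'
  exact hk'.resolve_right hkq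

end SimpleGraph

section JunctionTree

variable {U I : Type} [Fintype U] [DecidableEq U] [Fintype I] (J : JT U I)

theorem mem_nbr {i r : I} : i ∈ nbr J r ↔ J.G.Adj i r := by
  simp [nbr]

theorem mem_upSet {u : U} {i r : I} :
    u ∈ upSet J i r ↔ ∃ p : J.G.Path (J.cl u) r, i ∈ p.1.support := by
  simp [upSet]

theorem JT.mem_cluster_self (u : U) : u ∈ J.C (J.cl u) :=
  J.cover u (Finset.mem_insert_self u _)

variable {J}

theorem cl_ne_of_mem_upSet {u : U} {i r : I} (hadj : J.G.Adj i r) (hu : u ∈ upSet J i r) :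
    J.cl u ≠ r := by
  obtain ⟨p, hi⟩ := (mem_upSet J).1 hu
  intro hcl
  have hnil : p.1.Nil := (p.2.nil_iff_eq).2 hcl
  rw [SimpleGraph.Walk.nil_iff_support_eq.1 hnil, List.mem_singleton, hcl] at hi
  exact hadj.ne hi

theorem eq_of_mem_upSet_of_mem_upSet {u : U} {i i' r : I} (hadj : J.G.Adj i r)
    (hadj' : J.G.Adj i' r) (hu : u ∈ upSet J i r) (hu' : u ∈ upSet J i' r) : i = i' := by
  obtain ⟨p, hi⟩ := (mem_upSet J).1 hu
  obtain ⟨p', hi'⟩ := (mem_upSet J).1 hu'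
  rw [(J.tree.existsUnique_path _ _).unique p.2 p'.2] at hi
  exact (J.tree.eq_penultimate_of_adj p'.2 hi hadj).trans
    (J.tree.eq_penultimate_of_adj p'.2 hi' hadj').symm

theorem exists_mem_upSet {u : U} {r : I} (hcl : J.cl u ≠ r) :
    ∃ i, J.G.Adj i r ∧ u ∈ upSet J i r := by
  obtain ⟨w⟩ := J.tree.connected.preconnected (J.cl u) r
  have hnil : ¬w.toPath.1.Nil := fun h => hcl ((w.toPath.2.nil_iff_eq).1 h)
  exact ⟨_, SimpleGraph.Walk.adj_penultimate hnil,
    (mem_upSet J).2 ⟨w.toPath, SimpleGraph.Walk.getVert_mem_support _ _⟩⟩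

theorem mem_sep_of_mem_upSet {u : U} {i r : I} (hu : u ∈ upSet J i r) (hC : u ∈ J.C r) :
    u ∈ sep J i r := by
  obtain ⟨p, hi⟩ := (mem_upSet J).1 hu
  exact Finset.mem_inter.2
    ⟨J.runInter _ _ p i hi (Finset.mem_inter.2 ⟨J.mem_cluster_self u, hC⟩), hC⟩

/-- The walk from `cl v` to `cl u` passes through `i'` and `i`, and `i' - r - i` is a path, so
running intersection puts `v` into `C i'` and then into `C r`. -/
theorem mem_sep_of_mem_upSet_of_mem_family {u v : U} {i i' r : I} (hadj : J.G.Adj i r)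
    (hadj' : J.G.Adj i' r) (hne : i ≠ i') (hu : u ∈ upSet J i r) (hv : v ∈ insert u (J.pa u))
    (hv' : v ∈ upSet J i' r) : v ∈ sep J i' r := by
  obtain ⟨q, hiq⟩ := (mem_upSet J).1 hu
  obtain ⟨p, hi'p⟩ := (mem_upSet J).1 hv'
  obtain ⟨w⟩ := J.tree.connected.preconnected (J.cl v) (J.cl u)
  have hi'q : i' ∉ q.1.support := fun h =>
    hne ((J.tree.eq_penultimate_of_adj q.2 hiq hadj).trans
      (J.tree.eq_penultimate_of_adj q.2 h hadj').symm)
  have hip : i ∉ p.1.support := fun h =>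
    hne ((J.tree.eq_penultimate_of_adj p.2 h hadj).trans
      (J.tree.eq_penultimate_of_adj p.2 hi'p hadj').symm)
  have hi'w : i' ∈ w.toPath.1.support :=
    J.tree.mem_support_of_mem_path_of_notMem_path p.2 hi'p hi'q _
  have hiw : i ∈ w.toPath.1.support := by
    have := J.tree.mem_support_of_mem_path_of_notMem_path q.2 hiq hip w.toPath.1.reverse
    rwa [SimpleGraph.Walk.support_reverse, List.mem_reverse] at this
  have hvw : v ∈ J.C (J.cl v) ∩ J.C (J.cl u) :=
    Finset.mem_inter.2 ⟨J.mem_cluster_self v, J.cover u hv⟩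
  have hvi' := J.runInter _ _ w.toPath i' hi'w hvw
  have hvi := J.runInter _ _ w.toPath i hiw hvw
  let e : J.G.Path i' i :=
    ⟨.cons hadj' (.cons hadj.symm .nil), by simp [hadj'.ne, hadj.ne.symm, hne.symm]⟩
  exact Finset.mem_inter.2
    ⟨hvi', J.runInter i' i e r (by simp [e]) (Finset.mem_inter.2 ⟨hvi', hvi⟩)⟩

theorem upSet_disjoint {i i' r : I} (hadj : J.G.Adj i r) (hadj' : J.G.Adj i' r) (hne : i ≠ i') :
    Disjoint (upSet J i r) (upSet J i' r) :=
  Finset.disjoint_left.2 fun _ hu hu' => hne (eq_of_mem_upSet_of_mem_upSet hadj hadj' hu hu')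

theorem pairwiseDisjoint_upSet (r : I) : (nbr J r : Set I).PairwiseDisjoint (upSet J · r) :=
  fun _ hi _ hi' hne => upSet_disjoint ((mem_nbr J).1 hi) ((mem_nbr J).1 hi') hne

theorem compl_cluster_eq_biUnion (r : I) :
    (J.C r)ᶜ = (nbr J r).biUnion fun i => upSet J i r \ sep J i r := by
  ext v
  simp only [Finset.mem_compl, Finset.mem_biUnion, Finset.mem_sdiff, mem_nbr]
  constructor
  · intro hv
    have hcl : J.cl v ≠ r := fun h => hv (h ▸ J.mem_cluster_self v)
    obtain ⟨i, hadj, hvi⟩ := exists_mem_upSet hcl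
    exact ⟨i, hadj, hvi, fun hs => hv (Finset.mem_inter.1 hs).2⟩
  · rintro ⟨i, -, hvi, hvs⟩ hv
    exact hvs (mem_sep_of_mem_upSet hvi hv)

variable {D : U → Type} {K : (u : U) → (∀ v, D v) → ℝ}

theorem dependsOn_prod_upSet (hK : ∀ u, DependsOn (K u) ↑(insert u (J.pa u))) {i r : I}
    (hadj : J.G.Adj i r) :
    DependsOn (∏ u ∈ upSet J i r, K u)
      (↑(((nbr J r).erase i).biUnion fun j => upSet J j r \ sep J j r))ᶜ := by
  refine dependsOn_prod fun u hu => (hK u).mono fun v hv hvB => ?_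
  obtain ⟨j, hj, hvj⟩ := Finset.mem_biUnion.1 hvB
  obtain ⟨hji, hj⟩ := Finset.mem_erase.1 hj
  exact (Finset.mem_sdiff.1 hvj).2 (mem_sep_of_mem_upSet_of_mem_family hadj
    ((mem_nbr J).1 hj) (Ne.symm hji) hu hv (Finset.mem_sdiff.1 hvj).1)

variable [∀ u, Fintype (D u)] [∀ u, DecidableEq (D u)]

theorem prod_eq_pot_mul_prod_upSet (r : I) :
    ∏ u, K u = pot J K r * ∏ i ∈ nbr J r, ∏ u ∈ upSet J i r, K u := by
  have hpart : Finset.univ = Finset.univ.filter (fun u => J.cl u = r) ∪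
      (nbr J r).biUnion (upSet J · r) := by
    ext u
    by_cases hcl : J.cl u = r
    · simp [hcl]
    · obtain ⟨i, hadj, hu⟩ := exists_mem_upSet hcl
      simpa [hcl, mem_nbr] using ⟨i, hadj, hu⟩
  have hdisj : Disjoint (Finset.univ.filter (fun u => J.cl u = r))
      ((nbr J r).biUnion (upSet J · r)) := by
    refine (Finset.disjoint_biUnion_right _ _ _).2 fun i hi => Finset.disjoint_left.2 ?_
    intro u hu hui
    exact cl_ne_of_mem_upSet ((mem_nbr J).1 hi) hui (Finset.mem_filter.1 hu).2
  funext x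
  simp only [Pi.mul_apply, Finset.prod_apply, pot]
  rw [← Finset.prod_biUnion (pairwiseDisjoint_upSet r), ← Finset.prod_union hdisj, ← hpart]

theorem msg_eq_sumOut (i r : I) :
    msg J K i r = sumOut (upSet J i r \ sep J i r) (∏ u ∈ upSet J i r, K u) := by
  funext x
  simp [msg, sumOut, Finset.prod_apply]

theorem dependsOn_pot (hK : ∀ u, DependsOn (K u) ↑(insert u (J.pa u))) (r : I) :
    DependsOn (pot J K r) ↑(J.C r) :=
  fun _ _ h => Finset.prod_congr rfl fun u hu => hK u fun v hv =>
    h v ((Finset.mem_filter.1 hu).2 ▸ J.cover u hv)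

theorem sumOut_univ_prod_eq_sumOut_cluster (hK : ∀ u, DependsOn (K u) ↑(insert u (J.pa u)))
    (r : I) (x : ∀ u, D u) :
    sumOut Finset.univ (∏ u, K u) x =
      sumOut (J.C r) (pot J K r * ∏ i ∈ nbr J r, msg J K i r) x := by
  have hsplit := sumOut_union (disjoint_compl_right (a := J.C r)) (∏ u, K u) x
  rw [Finset.union_compl] at hsplit
  rw [hsplit]
  congr 1
  funext z
  have hc : DependsOn (pot J K r) (↑((nbr J r).biUnion fun i => upSet J i r \ sep J i r))ᶜ := by
    rw [← compl_cluster_eq_biUnion, Finset.coe_compl, compl_compl]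
    exact dependsOn_pot hK r
  rw [compl_cluster_eq_biUnion, prod_eq_pot_mul_prod_upSet r,
    sumOut_biUnion_mul_prod _ ((pairwiseDisjoint_upSet r).mono fun _ => Finset.sdiff_subset) hc
      (fun i hi => dependsOn_prod_upSet hK ((mem_nbr J).1 hi)) z]
  simp [msg_eq_sumOut, Finset.prod_apply]

end JunctionTree

/-- The evidence probability can be obtained at any single cluster r:
P(E) = ∑_{X_{C_r}} Φ_r(X_{C_r}) ∏_{i ∈ n(r)} M_{i→r}(X_{S_ir}). -/
theorem jt_evidence_at_root {U I : Type} [Fintype U] [DecidableEq U] [Fintype I]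
    (J : JT U I) {D : U → Type} [∀ u, Fintype (D u)] [∀ u, DecidableEq (D u)]
    (cpd : (u : U) → (∀ v, D v) → ℝ) (ev : (u : U) → Finset (D u))
    (K : (u : U) → (∀ v, D v) → ℝ)
    (hK : ∀ u x, K u x = (if x u ∈ ev u then (1 : ℝ) else 0) * cpd u x)
    (hloc : ∀ u x x', (∀ v ∈ insert u (J.pa u), x v = x' v) → cpd u x = cpd u x')
    (r : I) (x : ∀ u, D u) :
    (∑ z : ∀ u, D u, ∏ u : U, K u z) =
      ∑ z : ∀ u, D u,
        if ∀ v, v ∉ J.C r → z v = x v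
        then pot J K r z * ∏ i ∈ nbr J r, msg J K i r z else 0 := by
  have hKloc : ∀ u, DependsOn (K u) ↑(insert u (J.pa u)) := fun u y y' h => by
    rw [hK, hK, h u (Finset.mem_insert_self u _), hloc u y y' h]
  calc (∑ z : ∀ u, D u, ∏ u : U, K u z)
      = sumOut Finset.univ (∏ u, K u) x := by simp [sumOut_univ, Finset.prod_apply]
    _ = sumOut (J.C r) (pot J K r * ∏ i ∈ nbr J r, msg J K i r) x :=
        sumOut_univ_prod_eq_sumOut_cluster hKloc r x
    _ = _ := by simp only [sumOut, Pi.mul_apply, Finset.prod_apply]
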